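/- Let a, c, ρ > 0 be constants with a·c > 1. Then the set of equilibria of the vector field F in [0,1]×[0,1] is exactly {(0,0), (0,1)}. Moreover, the Jacobian matrix of F at (0,1) has two real eigenvalues that are both strictly negative (so (0,1) is a hyperbolic sink), and the Jacobian matrix of F at (0,0) has one strictly positive and one strictly negative real eigenvalue (so (0,0) is a hyperbolic saddle). -/

import Mathlib

open Polynomial

/-- The vector field of the aggressive-competition model:
`F(u,v) = (u(1-u-v) - a c u, ρ v (1-u-v) - a u)`. -/
def Fvec (a c ρ : ℝ) : ℝ × ℝ → ℝ × ℝ :=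
  fun p => (p.1 * (1 - p.1 - p.2) - a * c * p.1, ρ * p.2 * (1 - p.1 - p.2) - a * p.1)

/-- The Jacobian of `Fvec` at a point, as an endomorphism of `ℝ × ℝ`. -/
noncomputable def Jac (a c ρ : ℝ) (p : ℝ × ℝ) : Module.End ℝ (ℝ × ℝ) :=
  (fderiv ℝ (Fvec a c ρ) p).toLinearMap

lemma jac_apply (a c ρ : ℝ) (p x : ℝ × ℝ) :
    Jac a c ρ p x = ((1 - 2*p.1 - p.2 - a*c) * x.1 + (-p.1) * x.2,
                     (-(ρ*p.2) - a) * x.1 + ρ*(1 - p.1 - 2*p.2) * x.2) := by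
  have h1 := ((hasFDerivAt_fst (𝕜 := ℝ) (E := ℝ) (F := ℝ) (p := p)).mul
      (((hasFDerivAt_const (1:ℝ) p).sub hasFDerivAt_fst).sub hasFDerivAt_snd)).sub
      (hasFDerivAt_fst.const_mul (a*c))
  have h2 := (((hasFDerivAt_snd (𝕜 := ℝ) (E := ℝ) (F := ℝ) (p := p)).const_mul ρ).mul
      (((hasFDerivAt_const (1:ℝ) p).sub hasFDerivAt_fst).sub hasFDerivAt_snd)).sub
      (hasFDerivAt_fst.const_mul a)
  have h : HasFDerivAt (Fvec a c ρ) _ p := h1.prodMk h2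
  rw [Jac, h.fderiv]
  simp
  constructor <;> ring

lemma charpoly_fin2 (M : Matrix (Fin 2) (Fin 2) ℝ) :
    M.charpoly = X^2 - C (M 0 0 + M 1 1) * X + C (M 0 0 * M 1 1 - M 0 1 * M 1 0) := by
  rw [Matrix.charpoly, Matrix.det_fin_two]
  simp [Matrix.charmatrix_apply_eq, Matrix.charmatrix_apply_ne]
  ring

lemma charpoly_end (f : Module.End ℝ (ℝ × ℝ)) (A B Cc D m₁ m₂ : ℝ)
    (h1 : f (1, 0) = (A, Cc)) (h2 : f (0, 1) = (B, D))
    (hs : A + D = m₁ + m₂) (hp : A * D - B * Cc = m₁ * m₂) :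
    f.charpoly = (X - C m₁) * (X - C m₂) := by
  rw [← LinearMap.charpoly_toMatrix f (Module.Basis.finTwoProd ℝ), charpoly_fin2]
  simp only [LinearMap.toMatrix_apply, Module.Basis.finTwoProd_zero, Module.Basis.finTwoProd_one,
    Module.Basis.coe_finTwoProd_repr, h1, h2]
  rw [show (![A, Cc] 0 + ![B, D] 1 : ℝ) = m₁ + m₂ by simpa using hs,
    show (![A, Cc] 0 * ![B, D] 1 - ![B, D] 0 * ![A, Cc] 1 : ℝ) = m₁ * m₂ by simpa using hp,
    C_add, C_mul]
  ring

theorem dynamics_case_ac_gt_one (a c ρ : ℝ) (ha : 0 < a) (hc : 0 < c) (hρ : 0 < ρ)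
    (hac : 1 < a * c) :
    -- the equilibria in [0,1] × [0,1] are exactly (0,0) and (0,1)
    {p : ℝ × ℝ | p ∈ Set.Icc ((0 : ℝ), (0 : ℝ)) (1, 1) ∧ Fvec a c ρ p = (0, 0)} =
      {((0 : ℝ), (0 : ℝ)), ((0 : ℝ), (1 : ℝ))} ∧
    -- (0,1) is a hyperbolic sink: two strictly negative real eigenvalues
    (∃ m₁ m₂ : ℝ, m₁ < 0 ∧ m₂ < 0 ∧
      (Jac a c ρ (0, 1)).charpoly = (X - C m₁) * (X - C m₂)) ∧
    -- (0,0) is a hyperbolic saddle: one positive and one negative real eigenvalue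
    (∃ k₁ k₂ : ℝ, 0 < k₁ ∧ k₂ < 0 ∧
      (Jac a c ρ (0, 0)).charpoly = (X - C k₁) * (X - C k₂)) := by
  refine ⟨?_, ?_, ?_⟩
  · ext ⟨u, v⟩
    simp only [Set.mem_setOf_eq, Set.mem_Icc, Set.mem_insert_iff, Set.mem_singleton_iff,
      Prod.mk.injEq, Prod.le_def, Fvec]
    constructor
    · rintro ⟨⟨⟨hu0, hv0⟩, hu1, hv1⟩, e1, e2⟩
      have hu : u = 0 := by
        by_contra h
        have h' : 0 < u := lt_of_le_of_ne hu0 (Ne.symm h)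
        nlinarith
      subst hu
      have hv : v * (1 - v) = 0 := by
        have : ρ * (v * (1 - v)) = 0 := by nlinarith
        exact (mul_eq_zero.1 this).resolve_left (ne_of_gt hρ)
      rcases mul_eq_zero.1 hv with h | h
      · exact Or.inl ⟨rfl, h⟩
      · exact Or.inr ⟨rfl, by linarith⟩
    · rintro (⟨rfl, rfl⟩ | ⟨rfl, rfl⟩) <;> norm_num
  · refine ⟨-(a*c), -ρ, by nlinarith, by linarith, ?_⟩
    refine charpoly_end _ (-(a*c)) 0 (-ρ - a) (-ρ) _ _ ?_ ?_ (by ring) (by ring)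
    · rw [jac_apply]; norm_num
    · rw [jac_apply]; norm_num
  · refine ⟨ρ, 1 - a*c, hρ, by linarith, ?_⟩
    refine charpoly_end _ (1 - a*c) 0 (-a) ρ _ _ ?_ ?_ (by ring) (by ring)
    · rw [jac_apply]; norm_num
    · rw [jac_apply]; norm_num
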